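/- (Krawczyk uniqueness) Let n be a natural number and let F : (Fin n → ℝ) → (Fin n → ℝ) be differentiable. Let lo, hi : Fin n → ℝ with lo ≤ hi componentwise, and set I := Set.Icc lo hi. Let J_lo, J_hi be n × n real matrices such that for every x ∈ I and all indices i, j, the (i,j) entry of the Jacobian matrix of F at x lies in [J_lo i j, J_hi i j]. Let Y be an n × n real matrix and suppose that for every n × n matrix A with J_lo i j ≤ A i j ≤ J_hi i j for all i, j, we have max_{i} Σ_{j} |(1 − Y * A) i j| < 1 (the operator norm of 1 − Y·A induced by the sup norm on ℝⁿ). Then F has at most one zero in I: for all x, y ∈ I with F x = 0 and F y = 0, x = y. -/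
import Mathlib


/-- Krawczyk operator: uniqueness of a zero. The operator norm induced by the sup
norm on ℝⁿ is the maximal absolute row sum, so the hypothesis
`max_i ∑_j |(1 - Y*A) i j| < 1` is expressed as `∀ i, ∑ j, |(1 - Y*A) i j| < 1`. -/
theorem krawczyk_uniqueness (n : ℕ)
    (F : (Fin n → ℝ) → (Fin n → ℝ)) (hF : Differentiable ℝ F)
    (lo hi : Fin n → ℝ) (hlohi : lo ≤ hi)
    (Jlo Jhi : Matrix (Fin n) (Fin n) ℝ)
    (hJ : ∀ x ∈ Set.Icc lo hi, ∀ (i : Fin n) (j : Fin n),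
      fderiv ℝ F x (Pi.single j 1) i ∈ Set.Icc (Jlo i j) (Jhi i j))
    (Y : Matrix (Fin n) (Fin n) ℝ)
    (hnorm : ∀ A : Matrix (Fin n) (Fin n) ℝ,
      (∀ (i : Fin n) (j : Fin n), Jlo i j ≤ A i j ∧ A i j ≤ Jhi i j) →
      ∀ i : Fin n, ∑ j : Fin n, |(1 - Y * A) i j| < 1) :
    ∀ x ∈ Set.Icc lo hi, ∀ y ∈ Set.Icc lo hi, F x = 0 → F y = 0 → x = y := by
  intro x hx y hy hFx hFy
  by_contra hne
  set d : Fin n → ℝ := x - y with hd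
  -- for each i, mean value theorem on t ↦ F (y + t • d) i
  have key : ∀ i : Fin n, ∃ z ∈ Set.Icc lo hi, fderiv ℝ F z d i = 0 := by
    intro i
    have hderiv : ∀ t : ℝ,
        HasDerivAt (fun t : ℝ => F (y + t • d) i)
          (fderiv ℝ F (y + t • d) d i) t := by
      intro t
      have h1 : HasDerivAt (fun t : ℝ => y + t • d) d t := by
        simpa using ((hasDerivAt_id t).smul_const d).const_add y
      have h2 := ((hF (y + t • d)).hasFDerivAt).comp_hasDerivAt t h1
      exact ((ContinuousLinearMap.proj i : ((Fin n → ℝ) →L[ℝ] ℝ)).hasFDerivAt).comp_hasDerivAt t h2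
    obtain ⟨c, hc, hc2⟩ := exists_hasDerivAt_eq_slope
      (fun t : ℝ => F (y + t • d) i) (fun t => fderiv ℝ F (y + t • d) d i)
      (by norm_num : (0:ℝ) < 1)
      (fun t _ => (hderiv t).continuousAt.continuousWithinAt)
      (fun t _ => hderiv t)
    refine ⟨y + c • d, ?_, ?_⟩
    · exact (convex_Icc lo hi).add_smul_sub_mem hy hx ⟨hc.1.le, hc.2.le⟩
    · have h1 : F (y + d) i = 0 := by
        simp [hd, hFx]
      rw [hc2]
      simp [h1, hFy]
  choose z hz hz0 using key
  set A : Matrix (Fin n) (Fin n) ℝ := fun i j => fderiv ℝ F (z i) (Pi.single j 1) i with hA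
  have hAmem : ∀ i j, Jlo i j ≤ A i j ∧ A i j ≤ Jhi i j := by
    intro i j
    exact ⟨(hJ (z i) (hz i) i j).1, (hJ (z i) (hz i) i j).2⟩
  have hAd : ∀ i, ∑ j, A i j * d j = 0 := by
    intro i
    have hsum : d = ∑ j, d j • (Pi.single j 1 : Fin n → ℝ) := by
      funext k
      simp [Finset.sum_apply, Pi.single_apply]
    have := hz0 i
    rw [show fderiv ℝ F (z i) d = fderiv ℝ F (z i) (∑ j, d j • (Pi.single j 1 : Fin n → ℝ)) by rw [← hsum]] at this
    rw [map_sum] at this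
    simp only [map_smul] at this
    simpa [Finset.sum_apply, mul_comm] using this
  -- now the contraction argument
  have hdne : d ≠ 0 := fun h => hne (by rwa [hd, sub_eq_zero] at h)
  obtain ⟨i0, hi0⟩ := Function.ne_iff.mp hdne
  obtain ⟨i, _, hi⟩ := Finset.exists_max_image Finset.univ (fun j => |d j|) ⟨i0, Finset.mem_univ i0⟩
  have hipos : 0 < |d i| := lt_of_lt_of_le (abs_pos.mpr (by simpa using hi0)) (hi i0 (Finset.mem_univ i0))
  have hdi : d i = ∑ j, (1 - Y * A) i j * d j := by
    have hYA : ∀ k, ∑ j, (Y * A) k j * d j = 0 := by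
      intro k
      simp only [Matrix.mul_apply, Finset.sum_mul]
      rw [Finset.sum_comm]
      simp only [mul_assoc, ← Finset.mul_sum]
      simp [hAd]
    simp only [Matrix.sub_apply, sub_mul, Finset.sum_sub_distrib, hYA, Matrix.one_apply]
    simp [Finset.sum_ite_eq, ite_mul]
  have hlt : |d i| < |d i| := by
    calc |d i| = |∑ j, (1 - Y * A) i j * d j| := by rw [← hdi]
    _ ≤ ∑ j, |(1 - Y * A) i j * d j| := Finset.abs_sum_le_sum_abs _ _
    _ ≤ ∑ j, |(1 - Y * A) i j| * |d i| := by
        apply Finset.sum_le_sum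
        intro j _
        rw [abs_mul]
        exact mul_le_mul_of_nonneg_left (hi j (Finset.mem_univ j)) (abs_nonneg _)
    _ = (∑ j, |(1 - Y * A) i j|) * |d i| := by rw [Finset.sum_mul]
    _ < 1 * |d i| := by
        exact mul_lt_mul_of_pos_right (hnorm A hAmem i) hipos
    _ = |d i| := one_mul _
  exact absurd hlt (lt_irrefl _)
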